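/- Assume limsup_{y→0⁺} y^{-2}∫₀^y [1/V(x) + 1/V(1−x)] dx < ∞. Let u ∈ L^∞(Σ) satisfy lim_{y→0⁺} ∫₀^T∫₀^y V(x)(u(t,x)−α(t))² dx dt = 0 for every T > 0. Then the boundary condition holds in space-time average: lim_{y→0⁺} (1/y)∫₀^T∫₀^y |u(t,x)−α(t)| dx dt = 0 for every T > 0. -/

import Mathlib

open MeasureTheory Set Function Filter Metric

noncomputable section

/-- `Σ = (0,∞) × (0,1)` as a subset of `ℝ²` (time × space). -/
def Sg : Set (ℝ × ℝ) := Ioi (0:ℝ) ×ˢ Ioo (0:ℝ) 1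

/-- `Σ_T = (0,T) × (0,1)`. -/
def SgT (T : ℝ) : Set (ℝ × ℝ) := Ioo (0:ℝ) T ×ˢ Ioo (0:ℝ) 1

/-- `L^∞` norm of a one-variable function on a set `s ⊆ ℝ`. -/
def supNorm1 (f : ℝ → ℝ) (s : Set ℝ) : ℝ :=
  (eLpNorm f ⊤ (volume.restrict s)).toReal

/-- `L^∞` norm of a two-variable function on `Σ`. -/
def supNorm2 (f : ℝ → ℝ → ℝ) : ℝ :=
  (eLpNorm (uncurry f) ⊤ (volume.restrict Sg)).toReal

/-- A Lax entropy–flux pair associated to the flux `J`: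
`f`, `q` are `C²`, `f'' ≥ 0` and `q' = f' J'`. -/
def LaxPair (J f q : ℝ → ℝ) : Prop :=
  ContDiff ℝ 2 f ∧ ContDiff ℝ 2 q ∧
  (∀ w, 0 ≤ iteratedDeriv 2 f w) ∧ (∀ w, deriv q w = deriv f w * deriv J w)

/-- A boundary entropy–flux pair (Otto): `(F,Q) ∈ C²(ℝ²;ℝ²)`, `(F,Q)(·,k)` is a
Lax pair for every `k`, and `F(k,k) = ∂_u F(u,k)|_{u=k} = Q(k,k) = 0`. -/
def BoundaryPair (J : ℝ → ℝ) (F Q : ℝ → ℝ → ℝ) : Prop :=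
  ContDiff ℝ 2 (uncurry F) ∧ ContDiff ℝ 2 (uncurry Q) ∧
  (∀ k, LaxPair J (fun w => F w k) (fun w => Q w k)) ∧
  (∀ k, F k k = 0 ∧ deriv (fun w => F w k) k = 0 ∧ Q k k = 0)

/-- Nonnegative `C²` test function with compact support contained in `s`. -/
def TestNN (φ : ℝ → ℝ → ℝ) (s : Set (ℝ × ℝ)) : Prop :=
  ContDiff ℝ 2 (uncurry φ) ∧ HasCompactSupport (uncurry φ) ∧
  tsupport (uncurry φ) ⊆ s ∧ ∀ t x, 0 ≤ φ t x

/-- Supremum of `|J'|` on the closed ball of radius `R` centred at `0`. -/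
def Msup (J : ℝ → ℝ) (R : ℝ) : ℝ := sSup ((fun w => |deriv J w|) '' closedBall (0:ℝ) R)

/-- The radius `max{‖ϱ‖_∞, ‖α‖_∞, ‖β‖_∞, ‖u₀‖_∞}`. -/
def Rdat (ϱ : ℝ → ℝ → ℝ) (α β u₀ : ℝ → ℝ) : ℝ :=
  max (max (supNorm2 ϱ) (supNorm1 α (Ioi 0))) (max (supNorm1 β (Ioi 0)) (supNorm1 u₀ (Ioo 0 1)))

/-- The Kruzhkov-form entropy inequality with boundary terms (integrable case),
for all `k ∈ ℝ` and all nonnegative `φ ∈ C_c²(ℝ²)`. -/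
def KruzIneqBd (J V : ℝ → ℝ) (ϱ : ℝ → ℝ → ℝ) (α β u₀ : ℝ → ℝ) (u : ℝ → ℝ → ℝ) : Prop :=
  ∀ (k : ℝ) (φ : ℝ → ℝ → ℝ), TestNN φ univ →
    (∫ x in Ioo (0:ℝ) 1, |u₀ x - k| * φ 0 x)
      + (∫ t in Ioi (0:ℝ), ∫ x in Ioo (0:ℝ) 1,
          (|u t x - k| * deriv (fun s => φ s x) t
            + Real.sign (u t x - k) * (J (u t x) - J k) * deriv (φ t) x))
    ≥ (∫ t in Ioi (0:ℝ), ∫ x in Ioo (0:ℝ) 1,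
          Real.sign (u t x - k) * (V x * (u t x - ϱ t x)) * φ t x)
      - Msup J (Rdat ϱ α β u₀) * ∫ t in Ioi (0:ℝ), (|α t - k| * φ t 0 + |β t - k| * φ t 1)

/-- Entropy solution in the integrable case: `u ∈ L^∞(Σ)` satisfying the
Kruzhkov-form generalized entropy inequality with boundary terms. -/
def EntropySolInt (J V : ℝ → ℝ) (ϱ : ℝ → ℝ → ℝ) (α β u₀ : ℝ → ℝ) (u : ℝ → ℝ → ℝ) : Prop :=
  MemLp (uncurry u) ⊤ (volume.restrict Sg) ∧ KruzIneqBd J V ϱ α β u₀ u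

/-- The energy bound (EB): `∬_{Σ_T} V (u-ϱ)² dx dt < ∞` for all `T > 0`. -/
def EnergyBound (V : ℝ → ℝ) (ϱ u : ℝ → ℝ → ℝ) : Prop :=
  ∀ T > 0, IntegrableOn (fun p : ℝ × ℝ => V p.2 * (u p.1 p.2 - ϱ p.1 p.2)^2) (SgT T)

/-- The interior entropy inequality (EI) for all Lax entropy–flux pairs and all
nonnegative `φ ∈ C_c²(ℝ × (0,1))`. -/
def LaxIneq (J V : ℝ → ℝ) (ϱ : ℝ → ℝ → ℝ) (u₀ : ℝ → ℝ) (u : ℝ → ℝ → ℝ) : Prop :=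
  ∀ f q : ℝ → ℝ, LaxPair J f q →
    ∀ φ : ℝ → ℝ → ℝ, TestNN φ (univ ×ˢ Ioo (0:ℝ) 1) →
    (∫ x in Ioo (0:ℝ) 1, f (u₀ x) * φ 0 x)
      + (∫ t in Ioi (0:ℝ), ∫ x in Ioo (0:ℝ) 1,
          (f (u t x) * deriv (fun s => φ s x) t + q (u t x) * deriv (φ t) x))
    ≥ ∫ t in Ioi (0:ℝ), ∫ x in Ioo (0:ℝ) 1,
        deriv f (u t x) * (V x * (u t x - ϱ t x)) * φ t x

/-- The interior Kruzhkov entropy inequality for all `k ∈ ℝ` and all nonnegative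
`φ ∈ C_c²(ℝ × (0,1))`. -/
def KruzIneqInt (J V : ℝ → ℝ) (ϱ : ℝ → ℝ → ℝ) (u₀ : ℝ → ℝ) (u : ℝ → ℝ → ℝ) : Prop :=
  ∀ (k : ℝ) (φ : ℝ → ℝ → ℝ), TestNN φ (univ ×ˢ Ioo (0:ℝ) 1) →
    (∫ x in Ioo (0:ℝ) 1, |u₀ x - k| * φ 0 x)
      + (∫ t in Ioi (0:ℝ), ∫ x in Ioo (0:ℝ) 1,
          (|u t x - k| * deriv (fun s => φ s x) t
            + Real.sign (u t x - k) * (J (u t x) - J k) * deriv (φ t) x))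
    ≥ ∫ t in Ioi (0:ℝ), ∫ x in Ioo (0:ℝ) 1,
        Real.sign (u t x - k) * (V x * (u t x - ϱ t x)) * φ t x

/-- Entropy solution in the non-integrable case with initial data `u₀`:
`u ∈ L^∞(Σ)` satisfying (EB) and (EI). -/
def EntropySolNon (J V : ℝ → ℝ) (ϱ : ℝ → ℝ → ℝ) (u₀ : ℝ → ℝ) (u : ℝ → ℝ → ℝ) : Prop :=
  MemLp (uncurry u) ⊤ (volume.restrict Sg) ∧ EnergyBound V ϱ u ∧ LaxIneq J V ϱ u₀ u

/-- The L² compatibility condition between `ϱ` and the boundary data `α`, `β`: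
`lim_{y→0⁺} ∫₀ᵀ∫₀ʸ V (ϱ-α)² = 0` and `lim_{y→0⁺} ∫₀ᵀ∫_{1-y}¹ V (ϱ-β)² = 0` for all `T > 0`. -/
def CompatL2 (V : ℝ → ℝ) (ϱ : ℝ → ℝ → ℝ) (α β : ℝ → ℝ) : Prop :=
  ∀ T > 0,
    Tendsto (fun y => ∫⁻ t in Ioo (0:ℝ) T, ∫⁻ x in Ioo (0:ℝ) y,
        ENNReal.ofReal (V x * (ϱ t x - α t)^2)) (nhdsWithin 0 (Ioi 0)) (nhds 0) ∧
    Tendsto (fun y => ∫⁻ t in Ioo (0:ℝ) T, ∫⁻ x in Ioo (1-y) 1,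
        ENNReal.ofReal (V x * (ϱ t x - β t)^2)) (nhdsWithin 0 (Ioi 0)) (nhds 0)

/-- The L¹ compatibility condition between `ϱ` and constant boundary data `a`, `b`. -/
def CompatL1 (V : ℝ → ℝ) (ϱ : ℝ → ℝ → ℝ) (a b : ℝ) : Prop :=
  ∀ T > 0,
    Tendsto (fun y => ∫⁻ t in Ioo (0:ℝ) T, ∫⁻ x in Ioo (0:ℝ) y,
        ENNReal.ofReal (V x * |ϱ t x - a|)) (nhdsWithin 0 (Ioi 0)) (nhds 0) ∧
    Tendsto (fun y => ∫⁻ t in Ioo (0:ℝ) T, ∫⁻ x in Ioo (1-y) 1,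
        ENNReal.ofReal (V x * |ϱ t x - b|)) (nhdsWithin 0 (Ioi 0)) (nhds 0)

/-- `V` is non-integrable at both endpoints: `∫₀^y V = ∫_{1-y}^1 V = ∞` for all `y ∈ (0,1)`. -/
def VNonInt (V : ℝ → ℝ) : Prop :=
  ∀ y ∈ Ioo (0:ℝ) 1,
    (∫⁻ x in Ioo (0:ℝ) y, ENNReal.ofReal (V x)) = ⊤ ∧
    (∫⁻ x in Ioo (1-y) 1, ENNReal.ofReal (V x)) = ⊤

/-- `limsup_{y→0⁺} y⁻² ∫₀^y [1/V(x) + 1/V(1-x)] dx < ∞`. -/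
def VUniq (V : ℝ → ℝ) : Prop :=
  ∃ C : ℝ, ∀ᶠ y in nhdsWithin (0:ℝ) (Ioi 0),
    (∫⁻ x in Ioo (0:ℝ) y, ENNReal.ofReal (1/V x + 1/V (1-x))) ≤ ENNReal.ofReal (C * y^2)

/-- Standing regularity assumptions on the flux `J` and the relaxation strength `V`:
`J ∈ C²(ℝ)`, `V ∈ C²((0,1);(0,∞))` and `V(x) → ∞` as `x → 0⁺` and `x → 1⁻`. -/
def Standing (J V : ℝ → ℝ) : Prop :=
  ContDiff ℝ 2 J ∧ ContDiffOn ℝ 2 V (Ioo 0 1) ∧ (∀ x ∈ Ioo (0:ℝ) 1, 0 < V x) ∧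
  Tendsto V (nhdsWithin 0 (Ioi 0)) atTop ∧ Tendsto V (nhdsWithin 1 (Iio 1)) atTop

lemma abs_le_young {v lam w : ℝ} (hv : 0 < v) (hl : 0 < lam) :
    |w| ≤ lam / (2 * v) + v * w ^ 2 / (2 * lam) := by
  rw [div_add_div _ _ (by positivity) (by positivity), le_div_iff₀ (by positivity),
    ← sq_abs w]
  nlinarith [sq_nonneg (lam - v * |w|), abs_nonneg w]

lemma key_bound (V α : ℝ → ℝ) (u : ℝ → ℝ → ℝ) (T y lam C' : ℝ)
    (hT : 0 < T) (hy : 0 < y) (hy1 : y ≤ 1) (hlam : 0 < lam) (hC' : 0 ≤ C')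
    (hVpos : ∀ x ∈ Ioo (0:ℝ) 1, 0 < V x)
    (hVcont : ContinuousOn V (Ioo 0 1))
    (hαm : AEStronglyMeasurable α (volume.restrict (Ioi (0:ℝ))))
    (hum : AEStronglyMeasurable (uncurry u) (volume.restrict Sg))
    (hCy : (∫⁻ x in Ioo (0:ℝ) y, ENNReal.ofReal (1/V x + 1/V (1-x)))
      ≤ ENNReal.ofReal (C' * y^2))
    (hE : (∫⁻ t in Ioo (0:ℝ) T, ∫⁻ x in Ioo (0:ℝ) y,
        ENNReal.ofReal (V x * (u t x - α t)^2)) ≠ ⊤) :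
    (∫ t in Ioo (0:ℝ) T, ∫ x in Ioo (0:ℝ) y, |u t x - α t|)
      ≤ lam / 2 * (C' * y ^ 2) * T
        + (1 / (2 * lam)) * (∫⁻ t in Ioo (0:ℝ) T, ∫⁻ x in Ioo (0:ℝ) y,
            ENNReal.ofReal (V x * (u t x - α t)^2)).toReal := by
  set ν := (volume.restrict (Ioo (0:ℝ) T)).prod (volume.restrict (Ioo (0:ℝ) y)) with hν
  have hsub : (Ioo (0:ℝ) T ×ˢ Ioo (0:ℝ) y) ⊆ Sg := by
    rw [Sg]
    exact Set.prod_mono Ioo_subset_Ioi_self (Ioo_subset_Ioo le_rfl hy1)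
  have hνr : ν = volume.restrict (Ioo (0:ℝ) T ×ˢ Ioo (0:ℝ) y) := by
    rw [hν, Measure.prod_restrict, ← Measure.volume_eq_prod]
  have hle : ν ≤ volume.restrict Sg := by
    rw [hνr]; exact Measure.restrict_mono hsub le_rfl
  have hw : AEStronglyMeasurable (fun p : ℝ × ℝ => u p.1 p.2 - α p.1) ν := by
    have h1 : AEStronglyMeasurable (fun p : ℝ × ℝ => u p.1 p.2) ν :=
      hum.mono_measure hle
    have h2 : AEStronglyMeasurable α (volume.restrict (Ioo (0:ℝ) T)) :=
      hαm.mono_measure (Measure.restrict_mono Ioo_subset_Ioi_self le_rfl)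
    exact h1.sub (hν ▸ h2.comp_fst)
  have hVm : AEMeasurable (fun p : ℝ × ℝ => V p.2) ν := by
    rw [hν]
    exact ((hVcont.mono (Ioo_subset_Ioo le_rfl hy1)).aemeasurable measurableSet_Ioo).comp_snd
  have hwm : AEMeasurable (fun p : ℝ × ℝ => (u p.1 p.2 - α p.1)^2) ν :=
    hw.aemeasurable.pow_const 2
  have hmem : ∀ᵐ p ∂ν, p ∈ Ioo (0:ℝ) T ×ˢ Ioo (0:ℝ) y := by
    rw [hνr]; exact ae_restrict_mem (measurableSet_Ioo.prod measurableSet_Ioo)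
  have hVposae : ∀ᵐ p ∂ν, 0 < V p.2 :=
    hmem.mono fun p hp => hVpos p.2 (Ioo_subset_Ioo le_rfl hy1 hp.2)
  -- first term
  have hB1 : (0:ℝ) ≤ lam / 2 * (C' * y ^ 2) * T := by positivity
  have hL1 : (∫⁻ p, ENNReal.ofReal (lam / (2 * V p.2)) ∂ν)
      ≤ ENNReal.ofReal (lam / 2 * (C' * y ^ 2) * T) := by
    have e1 : ∀ p : ℝ × ℝ, ENNReal.ofReal (lam / (2 * V p.2))
        = ENNReal.ofReal (lam / 2) * ENNReal.ofReal (1 / V p.2) := by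
      intro p
      rw [← ENNReal.ofReal_mul (by positivity)]
      congr 1
      rw [div_mul_div_comm, mul_one]
    have hmeas1 : AEMeasurable (fun p : ℝ × ℝ => ENNReal.ofReal (1 / V p.2)) ν :=
      ENNReal.measurable_ofReal.comp_aemeasurable (aemeasurable_const.div hVm)
    have hprod1 : (∫⁻ p, ENNReal.ofReal (1 / V p.2) ∂ν)
        = ∫⁻ t in Ioo (0:ℝ) T, ∫⁻ x in Ioo (0:ℝ) y, ENNReal.ofReal (1 / V x) := by
      rw [hν] at hmeas1 ⊢
      exact lintegral_prod _ hmeas1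
    have hIh : (∫⁻ x in Ioo (0:ℝ) y, ENNReal.ofReal (1 / V x))
        ≤ ENNReal.ofReal (C' * y ^ 2) := by
      refine le_trans (lintegral_mono_ae ?_) hCy
      filter_upwards [ae_restrict_mem measurableSet_Ioo] with x hx
      apply ENNReal.ofReal_le_ofReal
      have h1x : (1:ℝ) - x ∈ Ioo (0:ℝ) 1 :=
        ⟨by nlinarith [hx.1, hx.2], by nlinarith [hx.1]⟩
      have hpos := hVpos _ h1x
      have : 0 ≤ 1 / V (1 - x) := by positivity
      linarith
    calc (∫⁻ p, ENNReal.ofReal (lam / (2 * V p.2)) ∂ν)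
        = ENNReal.ofReal (lam / 2) * ∫⁻ p, ENNReal.ofReal (1 / V p.2) ∂ν := by
          simp_rw [e1]; exact lintegral_const_mul' _ _ ENNReal.ofReal_ne_top
      _ ≤ ENNReal.ofReal (lam / 2) * (ENNReal.ofReal (C' * y ^ 2) * ENNReal.ofReal T) := by
          gcongr
          rw [hprod1]
          calc (∫⁻ t in Ioo (0:ℝ) T, ∫⁻ x in Ioo (0:ℝ) y, ENNReal.ofReal (1 / V x))
              ≤ ∫⁻ _ in Ioo (0:ℝ) T, ENNReal.ofReal (C' * y ^ 2) :=
                lintegral_mono fun _ => hIh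
            _ = ENNReal.ofReal (C' * y ^ 2) * ENNReal.ofReal T := by
                rw [lintegral_const, Measure.restrict_apply_univ, Real.volume_Ioo, sub_zero]
      _ = ENNReal.ofReal (lam / 2 * (C' * y ^ 2) * T) := by
          rw [← ENNReal.ofReal_mul (by positivity), ← ENNReal.ofReal_mul (by positivity)]
          congr 1
          ring
  have hnn1 : 0 ≤ᵐ[ν] fun p : ℝ × ℝ => lam / (2 * V p.2) :=
    hVposae.mono fun p hp => by positivity
  have hm1 : AEStronglyMeasurable (fun p : ℝ × ℝ => lam / (2 * V p.2)) ν :=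
    (aemeasurable_const.div (hVm.const_mul 2)).aestronglyMeasurable
  have hInt1 : Integrable (fun p : ℝ × ℝ => lam / (2 * V p.2)) ν :=
    ⟨hm1, (hasFiniteIntegral_iff_ofReal hnn1).2 (hL1.trans_lt ENNReal.ofReal_lt_top)⟩
  have hI1 : (∫ p, lam / (2 * V p.2) ∂ν) ≤ lam / 2 * (C' * y ^ 2) * T := by
    rw [integral_eq_lintegral_of_nonneg_ae hnn1 hm1]
    exact ENNReal.toReal_le_of_le_ofReal hB1 hL1
  -- second term
  set E := ∫⁻ t in Ioo (0:ℝ) T, ∫⁻ x in Ioo (0:ℝ) y,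
      ENNReal.ofReal (V x * (u t x - α t)^2) with hEdef
  have hmeas2 : AEMeasurable
      (fun p : ℝ × ℝ => ENNReal.ofReal (V p.2 * (u p.1 p.2 - α p.1)^2)) ν :=
    ENNReal.measurable_ofReal.comp_aemeasurable (hVm.mul hwm)
  have hL2 : (∫⁻ p, ENNReal.ofReal (V p.2 * (u p.1 p.2 - α p.1)^2 / (2 * lam)) ∂ν)
      = ENNReal.ofReal (1 / (2 * lam)) * E := by
    have e2 : ∀ p : ℝ × ℝ,
        ENNReal.ofReal (V p.2 * (u p.1 p.2 - α p.1)^2 / (2 * lam))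
          = ENNReal.ofReal (1 / (2 * lam))
            * ENNReal.ofReal (V p.2 * (u p.1 p.2 - α p.1)^2) := by
      intro p
      rw [← ENNReal.ofReal_mul (by positivity)]
      congr 1
      ring
    simp_rw [e2]
    rw [lintegral_const_mul' _ _ ENNReal.ofReal_ne_top]
    congr 1
    rw [hν] at hmeas2 ⊢
    rw [hEdef]
    exact lintegral_prod _ hmeas2
  have hnn2 : 0 ≤ᵐ[ν] fun p : ℝ × ℝ => V p.2 * (u p.1 p.2 - α p.1)^2 / (2 * lam) :=
    hVposae.mono fun p hp => by positivity
  have hm2 : AEStronglyMeasurable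
      (fun p : ℝ × ℝ => V p.2 * (u p.1 p.2 - α p.1)^2 / (2 * lam)) ν :=
    ((hVm.mul hwm).div aemeasurable_const).aestronglyMeasurable
  have hInt2 : Integrable
      (fun p : ℝ × ℝ => V p.2 * (u p.1 p.2 - α p.1)^2 / (2 * lam)) ν :=
    ⟨hm2, (hasFiniteIntegral_iff_ofReal hnn2).2
      (by rw [hL2]; exact ENNReal.mul_lt_top ENNReal.ofReal_lt_top (lt_top_iff_ne_top.2 hE))⟩
  have hI2 : (∫ p, V p.2 * (u p.1 p.2 - α p.1)^2 / (2 * lam) ∂ν)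
      = 1 / (2 * lam) * E.toReal := by
    rw [integral_eq_lintegral_of_nonneg_ae hnn2 hm2, hL2, ENNReal.toReal_mul,
      ENNReal.toReal_ofReal (by positivity)]
  -- the function itself
  have hgm : AEStronglyMeasurable (fun p : ℝ × ℝ => |u p.1 p.2 - α p.1|) ν := by
    have := hw.norm
    simpa [Real.norm_eq_abs] using this
  have hae_le : ∀ᵐ p ∂ν, |u p.1 p.2 - α p.1|
      ≤ lam / (2 * V p.2) + V p.2 * (u p.1 p.2 - α p.1)^2 / (2 * lam) :=
    hVposae.mono fun p hp => abs_le_young hp hlam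
  have hsum : Integrable (fun p : ℝ × ℝ =>
      lam / (2 * V p.2) + V p.2 * (u p.1 p.2 - α p.1)^2 / (2 * lam)) ν :=
    hInt1.add hInt2
  have hgint : Integrable (fun p : ℝ × ℝ => |u p.1 p.2 - α p.1|) ν := by
    refine hsum.mono hgm ?_
    filter_upwards [hae_le] with p hp
    rw [Real.norm_eq_abs, abs_abs]
    exact hp.trans (le_abs_self _)
  have hFeq : (∫ t in Ioo (0:ℝ) T, ∫ x in Ioo (0:ℝ) y, |u t x - α t|)
      = ∫ p, |u p.1 p.2 - α p.1| ∂ν := by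
    rw [hν] at hgint ⊢
    have hgint2 : Integrable (uncurry fun t x => |u t x - α t|)
        ((volume.restrict (Ioo (0:ℝ) T)).prod (volume.restrict (Ioo (0:ℝ) y))) := hgint
    exact integral_integral hgint2
  rw [hFeq]
  calc (∫ p, |u p.1 p.2 - α p.1| ∂ν)
      ≤ ∫ p, (lam / (2 * V p.2) + V p.2 * (u p.1 p.2 - α p.1)^2 / (2 * lam)) ∂ν :=
        integral_mono_ae hgint hsum hae_le
    _ = (∫ p, lam / (2 * V p.2) ∂ν)
        + ∫ p, V p.2 * (u p.1 p.2 - α p.1)^2 / (2 * lam) ∂ν :=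
        integral_add hInt1 hInt2
    _ ≤ lam / 2 * (C' * y ^ 2) * T + 1 / (2 * lam) * E.toReal := by
        rw [hI2]; exact add_le_add_left hI1 _

/-- If `limsup_{y→0⁺} y⁻²∫₀^y [1/V(x)+1/V(1-x)] dx < ∞` and
`u ∈ L^∞(Σ)` satisfies `lim_{y→0⁺} ∫₀ᵀ∫₀^y V (u-α)² dx dt = 0` for every `T > 0`,
then the boundary condition holds in space-time average:
`lim_{y→0⁺} (1/y)∫₀ᵀ∫₀^y |u-α| dx dt = 0` for every `T > 0`. -/
theorem boundary_condition_average
    (V α : ℝ → ℝ) (u : ℝ → ℝ → ℝ)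
    (hV : ContDiffOn ℝ 2 V (Ioo 0 1)) (hVpos : ∀ x ∈ Ioo (0:ℝ) 1, 0 < V x)
    (hV0 : Tendsto V (nhdsWithin 0 (Ioi 0)) atTop)
    (hV1 : Tendsto V (nhdsWithin 1 (Iio 1)) atTop)
    (hα : MemLp α ⊤ (volume.restrict (Ioi (0:ℝ))))
    (hu : MemLp (uncurry u) ⊤ (volume.restrict Sg))
    (hVuniq : VUniq V)
    (hbd : ∀ T > 0,
      Tendsto (fun y => ∫⁻ t in Ioo (0:ℝ) T, ∫⁻ x in Ioo (0:ℝ) y,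
          ENNReal.ofReal (V x * (u t x - α t)^2))
        (nhdsWithin 0 (Ioi 0)) (nhds 0)) :
    ∀ T > 0,
      Tendsto (fun y => (1/y) * ∫ t in Ioo (0:ℝ) T, ∫ x in Ioo (0:ℝ) y, |u t x - α t|)
        (nhdsWithin 0 (Ioi 0)) (nhds 0) := by
  obtain ⟨C, hC⟩ := hVuniq
  intro T hT
  rw [Metric.tendsto_nhds]
  intro ε hε
  set C' := max C 0 with hC'def
  have hC'0 : 0 ≤ C' := le_max_right _ _
  set μ0 := ε / (T * C' + 1) with hμ0def
  have hden : 0 < T * C' + 1 := by positivity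
  have hμ0 : 0 < μ0 := by positivity
  have hev1 : ∀ᶠ y in nhdsWithin (0:ℝ) (Ioi 0), y ∈ Ioi (0:ℝ) := self_mem_nhdsWithin
  have hev2 : ∀ᶠ y in nhdsWithin (0:ℝ) (Ioi 0), y ≤ 1 := by
    filter_upwards [Ioo_mem_nhdsGT (zero_lt_one (α := ℝ))] with y hy
    exact hy.2.le
  have hev4 : ∀ᶠ y in nhdsWithin (0:ℝ) (Ioi 0),
      (∫⁻ t in Ioo (0:ℝ) T, ∫⁻ x in Ioo (0:ℝ) y,
        ENNReal.ofReal (V x * (u t x - α t)^2)) < ENNReal.ofReal (μ0 * ε) :=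
    (hbd T hT).eventually_lt_const (by
      simpa using ENNReal.ofReal_pos.2 (by positivity))
  filter_upwards [hev1, hev2, hC, hev4] with y hy0 hy1 hCy hEy
  have hy0' : 0 < y := hy0
  set E := ∫⁻ t in Ioo (0:ℝ) T, ∫⁻ x in Ioo (0:ℝ) y,
      ENNReal.ofReal (V x * (u t x - α t)^2) with hEdef
  have hEne : E ≠ ⊤ := (hEy.trans_le le_top).ne
  have hEt : E.toReal < μ0 * ε := ENNReal.toReal_lt_of_lt_ofReal hEy
  set lam := μ0 / y with hlamdef
  have hlam : 0 < lam := by positivity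
  have hCy' : (∫⁻ x in Ioo (0:ℝ) y, ENNReal.ofReal (1/V x + 1/V (1-x)))
      ≤ ENNReal.ofReal (C' * y^2) :=
    hCy.trans (ENNReal.ofReal_le_ofReal
      (mul_le_mul_of_nonneg_right (le_max_left _ _) (sq_nonneg _)))
  have hkey := key_bound V α u T y lam C' hT hy0' hy1 hlam hC'0 hVpos
    hV.continuousOn hα.1 hu.1 hCy' hEne
  have hFnn : 0 ≤ ∫ t in Ioo (0:ℝ) T, ∫ x in Ioo (0:ℝ) y, |u t x - α t| :=
    integral_nonneg fun t => integral_nonneg fun x => abs_nonneg _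
  have hynn : (0:ℝ) ≤ 1 / y := by positivity
  have hmain : (1/y) * ∫ t in Ioo (0:ℝ) T, ∫ x in Ioo (0:ℝ) y, |u t x - α t|
      ≤ μ0 * C' * T / 2 + E.toReal / (2 * μ0) := by
    have h1 := mul_le_mul_of_nonneg_left hkey hynn
    have h2 : (1/y) * (lam / 2 * (C' * y ^ 2) * T + 1 / (2 * lam) * E.toReal)
        = μ0 * C' * T / 2 + E.toReal / (2 * μ0) := by
      rw [hlamdef]
      field_simp
    rw [h2] at h1
    exact h1
  have hfirst : μ0 * C' * T / 2 ≤ ε / 2 := by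
    have h1 : μ0 * (C' * T) ≤ ε := by
      rw [hμ0def, div_mul_eq_mul_div, div_le_iff₀ hden]
      nlinarith [hε.le, hC'0, hT.le]
    linarith [h1]
  have hsecond : E.toReal / (2 * μ0) < ε / 2 := by
    rw [div_lt_iff₀ (by positivity)]
    nlinarith
  have habs : (1/y) * (∫ t in Ioo (0:ℝ) T, ∫ x in Ioo (0:ℝ) y, |u t x - α t|) < ε := by
    calc (1/y) * ∫ t in Ioo (0:ℝ) T, ∫ x in Ioo (0:ℝ) y, |u t x - α t|
        ≤ μ0 * C' * T / 2 + E.toReal / (2 * μ0) := hmain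
      _ < ε / 2 + ε / 2 := by linarith
      _ = ε := by ring
  rw [Real.dist_eq, sub_zero, abs_of_nonneg (mul_nonneg hynn hFnn)]
  exact habs
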